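/- Let G be a σ-compact locally compact group with Haar measure μ_G, Q a symmetric open relatively compact unit neighborhood, and Λ, Γ relatively separated families in G. Suppose M = (M_{λ,γ})_{λ∈Λ,γ∈Γ} is a matrix admitting a continuous nonnegative envelope Θ with M_Q Θ ∈ L¹(G) and |M_{λ,γ}| ≤ min{Θ(γ⁻¹λ), Θ(λ⁻¹γ)} for all λ, γ. Then M satisfies the Schur conditions: sup_γ Σ_{λ∈Λ} |M_{λ,γ}| ≤ (Rel(Λ)/μ_G(Q)) ‖M_QΘ‖_{L¹} and sup_λ Σ_{γ∈Γ} |M_{λ,γ}| ≤ (Rel(Γ)/μ_G(Q)) ‖M_QΘ‖_{L¹}; consequently M defines a bounded operator ℓ^p(Γ) → ℓ^p(Λ) for every p ∈ [1,∞] with norm at most (max{Rel(Λ),Rel(Γ)}/μ_G(Q)) ‖M_QΘ‖_{L¹}. -/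

import Mathlib

/-
For every `y`, left invariance of `μ` and the symmetry of `Q` give
`Θ y * μ Q ≤ ∫_{y Q} M_Q Θ`, and the translates `y_i Q` of a relatively separated family
overlap at most `Rel` times, so `∑ Θ y_i ≤ Rel / μ Q * ‖M_Q Θ‖₁`. Applied to the translated
families `γ⁻¹ Λ` and `λ⁻¹ Γ` this bounds the column and row sums of `|M|`.
The `ℓ^p` bound is Schur's test: the weighted Hölder inequality with weights `|M_{λγ}|` gives
`|(M c)_λ|^p ≤ K^(p-1) ∑_γ |M_{λγ}| |c_γ|^p`, and summing over `λ` with the column bound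
gives `‖M c‖_p^p ≤ K^p ‖c‖_p^p`.
-/

open MeasureTheory Measure
open scoped Pointwise ENNReal NNReal

section RelSeparated

variable {G : Type*} [Group G] {ι : Type*}

/-- `Rel(y) ≤ N`, where `Rel(y) = sup_x #{i | y i ∈ x Q}`. -/
def IsRelSeparated (Q : Set G) (N : ℕ) (y : ι → G) : Prop :=
  ∀ x : G, {i | y i ∈ x • Q}.Finite ∧ {i | y i ∈ x • Q}.ncard ≤ N

lemma IsRelSeparated.mul_left {Q : Set G} {N : ℕ} {y : ι → G} (h : IsRelSeparated Q N y)
    (a : G) : IsRelSeparated Q N (fun i => a * y i) := by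
  intro x
  have hset : {i | a * y i ∈ x • Q} = {i | y i ∈ (a⁻¹ * x) • Q} := by
    ext i
    simp only [Set.mem_ofPred_eq, Set.mem_smul_set_iff_inv_smul_mem, smul_eq_mul, mul_inv_rev,
      inv_inv, mul_assoc]
  rw [hset]
  exact h _

lemma mem_smul_set_comm_of_inv_eq {Q : Set G} (hQ : Q⁻¹ = Q) {x y : G} :
    x ∈ y • Q ↔ y ∈ x • Q := by
  suffices ∀ a b : G, a ∈ b • Q → b ∈ a • Q from ⟨this x y, this y x⟩
  intro a b h
  rw [Set.mem_smul_set_iff_inv_smul_mem, smul_eq_mul] at h ⊢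
  rwa [← hQ, Set.mem_inv, mul_inv_rev, inv_inv]

end RelSeparated

section LocalSup

variable {G : Type*} [Group G]

/-- The local maximal function `M_Q Θ`. -/
noncomputable def localSup (Q : Set G) (Θ : G → ℝ) (x : G) : ℝ := ⨆ q ∈ Q, Θ (x * q)

lemma localSup_nonneg {Q : Set G} {Θ : G → ℝ} (hΘ : ∀ x, 0 ≤ Θ x) (x : G) :
    0 ≤ localSup Q Θ x :=
  Real.iSup_nonneg fun _ => Real.iSup_nonneg fun _ => hΘ _

lemma le_localSup [TopologicalSpace G] [ContinuousMul G] {Q : Set G} (hQ : IsCompact (closure Q))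
    {Θ : G → ℝ} (hΘ : Continuous Θ) {x z : G} (hz : z ∈ x • Q) : Θ z ≤ localSup Q Θ x := by
  obtain ⟨q, hq, rfl⟩ := hz
  obtain ⟨C, hC⟩ := (hQ.image (hΘ.comp (continuous_const_mul x))).bddAbove
  refine le_ciSup₂ (f := fun q (_ : q ∈ Q) => Θ (x * q)) ⟨C, ?_⟩ q hq
  simp only [mem_upperBounds, Set.mem_iUnion, Set.mem_range]
  rintro _ ⟨q', hq', rfl⟩
  exact hC ⟨q', subset_closure hq', rfl⟩

end LocalSup

lemma Finset.sum_indicator_le_mul_of_ncard_le {X ι : Type*} {t : ι → Set X} {F : X → ℝ} {x : X}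
    {N : ℕ} (hF : 0 ≤ F x) (hfin : {i | x ∈ t i}.Finite) (hcard : {i | x ∈ t i}.ncard ≤ N)
    (s : Finset ι) : ∑ i ∈ s, (t i).indicator F x ≤ N * F x := by
  classical
  rw [Finset.sum_indicator_eq_sum_filter, Finset.sum_const, nsmul_eq_mul]
  gcongr
  calc (s.filter fun i => x ∈ t i).card
      = ((s.filter fun i => x ∈ t i : Finset ι) : Set ι).ncard := (Set.ncard_coe_finset _).symm
    _ ≤ N := (Set.ncard_le_ncard (fun i hi => (Finset.mem_filter.1 hi).2) hfin).trans hcard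

section Sampling

variable {G : Type*} [Group G] [TopologicalSpace G] [ContinuousMul G] [MeasurableSpace G]
  [MeasurableMul G]
  {μ : Measure G} [μ.IsMulLeftInvariant] {Q : Set G} {Θ : G → ℝ} {ι : Type*} {N : ℕ} {y : ι → G}

lemma IsRelSeparated.sum_mul_measureReal_le (hy : IsRelSeparated Q N y) (hQ : MeasurableSet Q)
    (hQsymm : Q⁻¹ = Q) (hQcomp : IsCompact (closure Q)) (hQfin : μ Q ≠ ∞)
    (hΘc : Continuous Θ) (hΘ0 : ∀ x, 0 ≤ Θ x) (hint : Integrable (localSup Q Θ) μ)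
    (s : Finset ι) : (∑ i ∈ s, Θ (y i)) * μ.real Q ≤ N * ∫ x, localSup Q Θ x ∂μ := by
  have hmeas : ∀ i, MeasurableSet (y i • Q) := fun i => hQ.const_smul (y i)
  have hpiece : ∀ i, Θ (y i) * μ.real Q ≤ ∫ x, (y i • Q).indicator (localSup Q Θ) x ∂μ := by
    intro i
    have hfin : μ (y i • Q) ≠ ∞ := by rwa [measure_smul]
    calc Θ (y i) * μ.real Q = ∫ _ in y i • Q, Θ (y i) ∂μ := by
          rw [setIntegral_const, smul_eq_mul, mul_comm, measureReal_def, measureReal_def,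
            measure_smul]
      _ ≤ ∫ x in y i • Q, localSup Q Θ x ∂μ :=
          setIntegral_mono_on (integrableOn_const hfin) hint.integrableOn (hmeas i)
            fun x hx => le_localSup hQcomp hΘc ((mem_smul_set_comm_of_inv_eq hQsymm).1 hx)
      _ = _ := (integral_indicator (hmeas i)).symm
  have hoverlap : ∀ x, ∑ i ∈ s, (y i • Q).indicator (localSup Q Θ) x ≤ N * localSup Q Θ x := by
    intro x
    have hset : {i | x ∈ y i • Q} = {i | y i ∈ x • Q} :=
      Set.ext fun i => mem_smul_set_comm_of_inv_eq hQsymm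
    exact s.sum_indicator_le_mul_of_ncard_le (localSup_nonneg hΘ0 x) (hset ▸ (hy x).1)
      (hset ▸ (hy x).2)
  calc (∑ i ∈ s, Θ (y i)) * μ.real Q
      ≤ ∑ i ∈ s, ∫ x, (y i • Q).indicator (localSup Q Θ) x ∂μ := by
        rw [Finset.sum_mul]; exact Finset.sum_le_sum fun i _ => hpiece i
    _ = ∫ x, ∑ i ∈ s, (y i • Q).indicator (localSup Q Θ) x ∂μ :=
        (integral_finsetSum s fun i _ => hint.indicator (hmeas i)).symm
    _ ≤ ∫ x, N * localSup Q Θ x ∂μ :=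
        integral_mono (integrable_finsetSum s fun i _ => hint.indicator (hmeas i))
          (hint.const_mul _) hoverlap
    _ = N * ∫ x, localSup Q Θ x ∂μ := integral_const_mul _ _

lemma IsRelSeparated.summable_and_tsum_le (hy : IsRelSeparated Q N y) (hQ : MeasurableSet Q)
    (hQsymm : Q⁻¹ = Q) (hQcomp : IsCompact (closure Q)) (hQpos : 0 < μ Q) (hQfin : μ Q ≠ ∞)
    (hΘc : Continuous Θ) (hΘ0 : ∀ x, 0 ≤ Θ x) (hint : Integrable (localSup Q Θ) μ)
    {a : ι → ℝ} (ha0 : ∀ i, 0 ≤ a i) (ha : ∀ i, a i ≤ Θ (y i)) :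
    Summable a ∧ ∑' i, a i ≤ N / μ.real Q * ∫ x, localSup Q Θ x ∂μ := by
  have hQreal : 0 < μ.real Q := ENNReal.toReal_pos hQpos.ne' hQfin
  have hfinite : ∀ s : Finset ι, ∑ i ∈ s, a i ≤ N / μ.real Q * ∫ x, localSup Q Θ x ∂μ := by
    intro s
    rw [div_mul_eq_mul_div, le_div_iff₀ hQreal]
    calc (∑ i ∈ s, a i) * μ.real Q ≤ (∑ i ∈ s, Θ (y i)) * μ.real Q := by
          gcongr with i; exact ha i
      _ ≤ _ := hy.sum_mul_measureReal_le hQ hQsymm hQcomp hQfin hΘc hΘ0 hint s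
  have hsum : Summable a := summable_of_sum_le ha0 hfinite
  exact ⟨hsum, hsum.tsum_le_of_sum_le hfinite⟩

end Sampling

lemma Real.rpow_tsum_mul_le_of_nonneg {ι : Type*} {p : ℝ} (hp : 1 ≤ p) {w f : ι → ℝ}
    (hw : ∀ i, 0 ≤ w i) (hf : ∀ i, 0 ≤ f i) (hws : Summable w)
    (hwf : Summable fun i => w i * f i ^ p) :
    (∑' i, w i * f i) ^ p ≤ (∑' i, w i) ^ (p - 1) * ∑' i, w i * f i ^ p := by
  have hp0 : 0 < p := zero_lt_one.trans_le hp
  have hwfp : ∀ i, 0 ≤ w i * f i ^ p := fun i => mul_nonneg (hw i) (by have := hf i; positivity)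
  have hW : 0 ≤ ∑' i, w i := tsum_nonneg hw
  have hWf : 0 ≤ ∑' i, w i * f i ^ p := tsum_nonneg hwfp
  have holder : ∑' i, w i * f i ≤ (∑' i, w i) ^ (1 - p⁻¹) * (∑' i, w i * f i ^ p) ^ p⁻¹ := by
    refine Real.tsum_le_of_sum_le (fun i => mul_nonneg (hw i) (hf i)) fun s => ?_
    refine (Real.inner_le_weight_mul_Lp_of_nonneg s hp w f hw hf).trans ?_
    have : 0 ≤ 1 - p⁻¹ := sub_nonneg.2 (inv_le_one_of_one_le₀ hp)
    have : 0 ≤ ∑ i ∈ s, w i := Finset.sum_nonneg fun i _ => hw i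
    have : 0 ≤ ∑ i ∈ s, w i * f i ^ p := Finset.sum_nonneg fun i _ => hwfp i
    have := hws.sum_le_tsum s fun i _ => hw i
    have := hwf.sum_le_tsum s fun i _ => hwfp i
    gcongr
  calc (∑' i, w i * f i) ^ p
      ≤ ((∑' i, w i) ^ (1 - p⁻¹) * (∑' i, w i * f i ^ p) ^ p⁻¹) ^ p :=
        Real.rpow_le_rpow (tsum_nonneg fun i => mul_nonneg (hw i) (hf i)) holder hp0.le
    _ = (∑' i, w i) ^ (p - 1) * ∑' i, w i * f i ^ p := by
        rw [Real.mul_rpow (by positivity) (by positivity), ← Real.rpow_mul hW,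
          ← Real.rpow_mul hWf, sub_mul, inv_mul_cancel₀ hp0.ne', one_mul, Real.rpow_one]

section SchurTest

variable {ι κ : Type*}

lemma summable_and_tsum_tsum_le_of_colSum_le {a : ι → κ → ℝ} {b : κ → ℝ} {K : ℝ}
    (ha : ∀ i j, 0 ≤ a i j) (hb : ∀ j, 0 ≤ b j) (hbs : Summable b)
    (hcol : ∀ j, Summable (fun i => a i j) ∧ ∑' i, a i j ≤ K)
    (hrow : ∀ i, Summable fun j => a i j * b j) :
    Summable (fun i => ∑' j, a i j * b j) ∧ ∑' i, ∑' j, a i j * b j ≤ K * ∑' j, b j := by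
  have hfinite : ∀ s : Finset ι, ∑ i ∈ s, ∑' j, a i j * b j ≤ K * ∑' j, b j := by
    intro s
    calc ∑ i ∈ s, ∑' j, a i j * b j = ∑' j, (∑ i ∈ s, a i j) * b j := by
          rw [← Summable.tsum_finsetSum fun i _ => hrow i]
          simp only [Finset.sum_mul]
      _ ≤ ∑' j, K * b j := by
          have hs : Summable fun j => (∑ i ∈ s, a i j) * b j :=
            (summable_sum fun i _ => hrow i).congr fun j => (Finset.sum_mul ..).symm
          refine hs.tsum_le_tsum (fun j => ?_) (hbs.mul_left K)
          exact mul_le_mul_of_nonneg_right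
            (((hcol j).1.sum_le_tsum s fun i _ => ha i j).trans (hcol j).2) (hb j)
      _ = K * ∑' j, b j := tsum_mul_left
  have hsum := summable_of_sum_le (fun i => tsum_nonneg fun j => mul_nonneg (ha i j) (hb j))
    hfinite
  exact ⟨hsum, hsum.tsum_le_of_sum_le hfinite⟩

variable {R : Type*} [NormedRing R] {A : ι → κ → R} {K : ℝ}

lemma summable_norm_mul_of_bounded {i : ι} (hrow : Summable fun j => ‖A i j‖) {b : κ → ℝ}
    {C : ℝ} (hb0 : ∀ j, 0 ≤ b j) (hbC : ∀ j, b j ≤ C) : Summable fun j => ‖A i j‖ * b j :=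
  .of_nonneg_of_le (fun j => mul_nonneg (norm_nonneg _) (hb0 j))
    (fun j => mul_le_mul_of_nonneg_left (hbC j) (norm_nonneg _)) (hrow.mul_right C)

lemma norm_tsum_mul_le {i : ι} {c : κ → R} (hs : Summable fun j => ‖A i j‖ * ‖c j‖) :
    ‖∑' j, A i j * c j‖ ≤ ∑' j, ‖A i j‖ * ‖c j‖ := by
  have hle : ∀ j, ‖A i j * c j‖ ≤ ‖A i j‖ * ‖c j‖ := fun j => norm_mul_le _ _
  have hs' : Summable fun j => ‖A i j * c j‖ := hs.of_nonneg_of_le (fun _ => norm_nonneg _) hle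
  exact (norm_tsum_le_tsum_norm hs').trans (hs'.tsum_le_tsum hle hs)

lemma schur_test_top (hK : 0 ≤ K) (hrow : ∀ i, Summable (fun j => ‖A i j‖) ∧ ∑' j, ‖A i j‖ ≤ K)
    (c : lp (fun _ : κ => R) ∞) :
    ∃ h : Memℓp (fun i => ∑' j, A i j * c j) ∞,
      ‖(⟨fun i => ∑' j, A i j * c j, h⟩ : lp (fun _ : ι => R) ∞)‖ ≤ K * ‖c‖ := by
  have hc : ∀ j, ‖c j‖ ≤ ‖c‖ := fun j => lp.norm_apply_le_norm ENNReal.top_ne_zero c j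
  have hbound : ∀ i, ‖∑' j, A i j * c j‖ ≤ K * ‖c‖ := by
    intro i
    have hs := summable_norm_mul_of_bounded (hrow i).1 (fun j => norm_nonneg (c j)) hc
    calc ‖∑' j, A i j * c j‖ ≤ ∑' j, ‖A i j‖ * ‖c j‖ := norm_tsum_mul_le hs
      _ ≤ ∑' j, ‖A i j‖ * ‖c‖ :=
          hs.tsum_le_tsum (fun j => mul_le_mul_of_nonneg_left (hc j) (norm_nonneg _))
            ((hrow i).1.mul_right _)
      _ = (∑' j, ‖A i j‖) * ‖c‖ := tsum_mul_right
      _ ≤ K * ‖c‖ := mul_le_mul_of_nonneg_right (hrow i).2 (norm_nonneg _)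
  have hmem : Memℓp (fun i => ∑' j, A i j * c j) ∞ :=
    memℓp_infty ⟨K * ‖c‖, by rintro _ ⟨i, rfl⟩; exact hbound i⟩
  exact ⟨hmem, lp.norm_le_of_forall_le (mul_nonneg hK (norm_nonneg c)) hbound⟩

lemma schur_test_of_ne_top {p : ℝ≥0∞} (hp1 : 1 ≤ p) (hp : p ≠ ∞) (hK : 0 ≤ K)
    (hcol : ∀ j, Summable (fun i => ‖A i j‖) ∧ ∑' i, ‖A i j‖ ≤ K)
    (hrow : ∀ i, Summable (fun j => ‖A i j‖) ∧ ∑' j, ‖A i j‖ ≤ K)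
    (c : lp (fun _ : κ => R) p) :
    ∃ h : Memℓp (fun i => ∑' j, A i j * c j) p,
      ‖(⟨fun i => ∑' j, A i j * c j, h⟩ : lp (fun _ : ι => R) p)‖ ≤ K * ‖c‖ := by
  set r := p.toReal
  have hr : 1 ≤ r := by simpa using ENNReal.toReal_mono hp hp1
  have hr0 : 0 < r := zero_lt_one.trans_le hr
  have hc : ∀ j, ‖c j‖ ≤ ‖c‖ := fun j => lp.norm_apply_le_norm (by positivity) c j
  have hrowc : ∀ i, Summable fun j => ‖A i j‖ * ‖c j‖ ^ r := fun i =>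
    summable_norm_mul_of_bounded (hrow i).1 (fun j => by positivity)
      fun j => Real.rpow_le_rpow (norm_nonneg _) (hc j) hr0.le
  obtain ⟨hTs, hTle⟩ := summable_and_tsum_tsum_le_of_colSum_le
    (a := fun i j => ‖A i j‖) (b := fun j => ‖c j‖ ^ r) (fun i j => norm_nonneg _)
    (fun j => by positivity) ((lp.memℓp c).summable hr0) hcol hrowc
  have hpoint : ∀ i, ‖∑' j, A i j * c j‖ ^ r ≤ K ^ (r - 1) * ∑' j, ‖A i j‖ * ‖c j‖ ^ r := by
    intro i
    have hs := summable_norm_mul_of_bounded (hrow i).1 (fun j => norm_nonneg (c j)) hc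
    calc ‖∑' j, A i j * c j‖ ^ r ≤ (∑' j, ‖A i j‖ * ‖c j‖) ^ r :=
          Real.rpow_le_rpow (norm_nonneg _) (norm_tsum_mul_le hs) hr0.le
      _ ≤ (∑' j, ‖A i j‖) ^ (r - 1) * ∑' j, ‖A i j‖ * ‖c j‖ ^ r :=
          Real.rpow_tsum_mul_le_of_nonneg hr (fun j => norm_nonneg _) (fun j => norm_nonneg _)
            (hrow i).1 (hrowc i)
      _ ≤ K ^ (r - 1) * ∑' j, ‖A i j‖ * ‖c j‖ ^ r := by
          have : 0 ≤ r - 1 := sub_nonneg.2 hr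
          gcongr
          exact (hrow i).2
  have hfs : Summable fun i => ‖∑' j, A i j * c j‖ ^ r :=
    .of_nonneg_of_le (fun i => by positivity) hpoint (hTs.mul_left _)
  refine ⟨memℓp_gen hfs, lp.norm_le_of_tsum_le hr0 (mul_nonneg hK (lp.norm_nonneg' c)) ?_⟩
  calc ∑' i, ‖∑' j, A i j * c j‖ ^ r ≤ ∑' i, K ^ (r - 1) * ∑' j, ‖A i j‖ * ‖c j‖ ^ r :=
        hfs.tsum_le_tsum hpoint (hTs.mul_left _)
    _ = K ^ (r - 1) * ∑' i, ∑' j, ‖A i j‖ * ‖c j‖ ^ r := tsum_mul_left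
    _ ≤ K ^ (r - 1) * (K * ∑' j, ‖c j‖ ^ r) := by gcongr
    _ = (K * ‖c‖) ^ r := by
        rw [Real.mul_rpow hK (lp.norm_nonneg' c), lp.norm_rpow_eq_tsum hr0, ← mul_assoc,
          ← Real.rpow_add_one' hK (by rw [sub_add_cancel]; exact hr0.ne'), sub_add_cancel]

theorem schur_test {p : ℝ≥0∞} (hp : 1 ≤ p) (hK : 0 ≤ K)
    (hcol : ∀ j, Summable (fun i => ‖A i j‖) ∧ ∑' i, ‖A i j‖ ≤ K)
    (hrow : ∀ i, Summable (fun j => ‖A i j‖) ∧ ∑' j, ‖A i j‖ ≤ K)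
    (c : lp (fun _ : κ => R) p) :
    ∃ h : Memℓp (fun i => ∑' j, A i j * c j) p,
      ‖(⟨fun i => ∑' j, A i j * c j, h⟩ : lp (fun _ : ι => R) p)‖ ≤ K * ‖c‖ := by
  rcases eq_or_ne p ∞ with rfl | hp_top
  · exact schur_test_top hK hrow c
  · exact schur_test_of_ne_top hp hp_top hK hcol hrow c

end SchurTest

theorem convolution_dominated_matrix_schur_and_bounded_general
    {G : Type*} [Group G] [TopologicalSpace G] [IsTopologicalGroup G]
    [MeasurableSpace G] [BorelSpace G]
    (μ : Measure G) [μ.IsHaarMeasure]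
    -- fixed symmetric open relatively compact unit neighborhood Q
    (Q : Set G) (hQopen : IsOpen Q) (hQsymm : Q⁻¹ = Q)
    (hQcomp : IsCompact (closure Q)) (hQpos : 0 < μ Q) (hQfin : μ Q ≠ ∞)
    -- relatively separated families with Rel(Λ) ≤ NΛ, Rel(Γ) ≤ NΓ
    {ιΛ ιΓ : Type*} (Λ : ιΛ → G) (Γ : ιΓ → G) (NΛ NΓ : ℕ)
    (hΛ : ∀ x : G, {i : ιΛ | Λ i ∈ x • Q}.Finite ∧ {i : ιΛ | Λ i ∈ x • Q}.ncard ≤ NΛ)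
    (hΓ : ∀ x : G, {i : ιΓ | Γ i ∈ x • Q}.Finite ∧ {i : ιΓ | Γ i ∈ x • Q}.ncard ≤ NΓ)
    -- a continuous nonnegative envelope with M_Q Θ ∈ L¹
    (Θ : G → ℝ) (hΘc : Continuous Θ) (hΘ0 : ∀ x, 0 ≤ Θ x)
    (hMQΘ : Integrable (fun x => ⨆ q ∈ Q, Θ (x * q)) μ)
    -- the dominated matrix
    (M : ιΛ → ιΓ → ℂ)
    (hM : ∀ l g, ‖M l g‖ ≤ min (Θ ((Γ g)⁻¹ * Λ l)) (Θ ((Λ l)⁻¹ * Γ g))) :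
    (∀ g : ιΓ, Summable (fun l => ‖M l g‖) ∧
        ∑' l : ιΛ, ‖M l g‖
          ≤ (NΛ : ℝ) / (μ Q).toReal * ∫ x, (⨆ q ∈ Q, Θ (x * q)) ∂μ) ∧
    (∀ l : ιΛ, Summable (fun g => ‖M l g‖) ∧
        ∑' g : ιΓ, ‖M l g‖
          ≤ (NΓ : ℝ) / (μ Q).toReal * ∫ x, (⨆ q ∈ Q, Θ (x * q)) ∂μ) ∧
    (∀ p : ℝ≥0∞, 1 ≤ p → ∀ c : ιΓ → ℂ, ∀ hc : Memℓp c p,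
        ∃ hMc : Memℓp (fun l : ιΛ => ∑' g : ιΓ, M l g * c g) p,
          ‖(⟨fun l : ιΛ => ∑' g : ιΓ, M l g * c g, hMc⟩ : lp (fun _ : ιΛ => ℂ) p)‖
            ≤ ((max NΛ NΓ : ℕ) : ℝ) / (μ Q).toReal
                * (∫ x, (⨆ q ∈ Q, Θ (x * q)) ∂μ)
                * ‖(⟨c, hc⟩ : lp (fun _ : ιΓ => ℂ) p)‖) := by
  have hQ : MeasurableSet Q := hQopen.measurableSet
  have hcol : ∀ g, Summable (fun l => ‖M l g‖) ∧
      ∑' l, ‖M l g‖ ≤ NΛ / μ.real Q * ∫ x, localSup Q Θ x ∂μ := fun g =>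
    (IsRelSeparated.mul_left hΛ (Γ g)⁻¹).summable_and_tsum_le hQ hQsymm hQcomp hQpos hQfin hΘc
      hΘ0 hMQΘ (fun l => norm_nonneg _) fun l => (hM l g).trans (min_le_left _ _)
  have hrow : ∀ l, Summable (fun g => ‖M l g‖) ∧
      ∑' g, ‖M l g‖ ≤ NΓ / μ.real Q * ∫ x, localSup Q Θ x ∂μ := fun l =>
    (IsRelSeparated.mul_left hΓ (Λ l)⁻¹).summable_and_tsum_le hQ hQsymm hQcomp hQpos hQfin hΘc
      hΘ0 hMQΘ (fun g => norm_nonneg _) fun g => (hM l g).trans (min_le_right _ _)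
  have hI : 0 ≤ ∫ x, localSup Q Θ x ∂μ := integral_nonneg fun x => localSup_nonneg hΘ0 x
  have hmax : ∀ N ≤ max NΛ NΓ, (N : ℝ) / μ.real Q * ∫ x, localSup Q Θ x ∂μ ≤
      ((max NΛ NΓ : ℕ) : ℝ) / μ.real Q * ∫ x, localSup Q Θ x ∂μ := fun N hN => by
    gcongr
  exact ⟨hcol, hrow, fun p hp c hc => schur_test hp (mul_nonneg (by positivity) hI)
    (fun g => ⟨(hcol g).1, (hcol g).2.trans (hmax _ (le_max_left _ _))⟩)
    (fun l => ⟨(hrow l).1, (hrow l).2.trans (hmax _ (le_max_right _ _))⟩) ⟨c, hc⟩⟩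

/-- Proposition 4.3 (ii)&(iii): a matrix `M` dominated by a continuous envelope
`Θ` with `M_Q Θ ∈ L¹(G)` over relatively separated families `Λ, Γ` satisfies the
Schur conditions and defines a bounded operator `ℓ^p(Γ) → ℓ^p(Λ)` for all
`p ∈ [1,∞]`. -/
theorem convolution_dominated_matrix_schur_and_bounded
    {G : Type*} [Group G] [TopologicalSpace G] [IsTopologicalGroup G]
    [LocallyCompactSpace G] [SigmaCompactSpace G]
    [MeasurableSpace G] [BorelSpace G]
    (μ : Measure G) [μ.IsHaarMeasure]
    -- fixed symmetric open relatively compact unit neighborhood Q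
    (Q : Set G) (hQopen : IsOpen Q) (hQone : (1 : G) ∈ Q) (hQsymm : Q⁻¹ = Q)
    (hQcomp : IsCompact (closure Q)) (hQpos : 0 < μ Q) (hQfin : μ Q ≠ ∞)
    -- relatively separated families with Rel(Λ) ≤ NΛ, Rel(Γ) ≤ NΓ
    {ιΛ ιΓ : Type*} (Λ : ιΛ → G) (Γ : ιΓ → G) (NΛ NΓ : ℕ)
    (hΛ : ∀ x : G, {i : ιΛ | Λ i ∈ x • Q}.Finite ∧ {i : ιΛ | Λ i ∈ x • Q}.ncard ≤ NΛ)
    (hΓ : ∀ x : G, {i : ιΓ | Γ i ∈ x • Q}.Finite ∧ {i : ιΓ | Γ i ∈ x • Q}.ncard ≤ NΓ)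
    -- a continuous nonnegative envelope with M_Q Θ ∈ L¹
    (Θ : G → ℝ) (hΘc : Continuous Θ) (hΘ0 : ∀ x, 0 ≤ Θ x)
    (hMQΘ : Integrable (fun x => ⨆ q ∈ Q, Θ (x * q)) μ)
    -- the dominated matrix
    (M : ιΛ → ιΓ → ℂ)
    (hM : ∀ l g, ‖M l g‖ ≤ min (Θ ((Γ g)⁻¹ * Λ l)) (Θ ((Λ l)⁻¹ * Γ g))) :
    (∀ g : ιΓ, Summable (fun l => ‖M l g‖) ∧
        ∑' l : ιΛ, ‖M l g‖
          ≤ (NΛ : ℝ) / (μ Q).toReal * ∫ x, (⨆ q ∈ Q, Θ (x * q)) ∂μ) ∧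
    (∀ l : ιΛ, Summable (fun g => ‖M l g‖) ∧
        ∑' g : ιΓ, ‖M l g‖
          ≤ (NΓ : ℝ) / (μ Q).toReal * ∫ x, (⨆ q ∈ Q, Θ (x * q)) ∂μ) ∧
    (∀ p : ℝ≥0∞, 1 ≤ p → ∀ c : ιΓ → ℂ, ∀ hc : Memℓp c p,
        ∃ hMc : Memℓp (fun l : ιΛ => ∑' g : ιΓ, M l g * c g) p,
          ‖(⟨fun l : ιΛ => ∑' g : ιΓ, M l g * c g, hMc⟩ : lp (fun _ : ιΛ => ℂ) p)‖
            ≤ ((max NΛ NΓ : ℕ) : ℝ) / (μ Q).toReal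
                * (∫ x, (⨆ q ∈ Q, Θ (x * q)) ∂μ)
                * ‖(⟨c, hc⟩ : lp (fun _ : ιΓ => ℂ) p)‖) :=
  convolution_dominated_matrix_schur_and_bounded_general μ Q hQopen hQsymm hQcomp hQpos hQfin Λ Γ NΛ
    NΓ hΛ hΓ Θ hΘc hΘ0 hMQΘ M hM
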